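/- Let η ∈ Δ^{K-1} be the clean posterior, T a K×K row-stochastic matrix with nonnegative entries, and ηⁿ = Tᵀη ∈ Δ^{K-1} the noisy posterior. For every p ∈ Δ^{K-1} with (Tᵀp)_j > 0 whenever ηⁿ_j > 0, the population forward-corrected risk satisfies the Gibbs inequality -∑_{j: ηⁿ_j>0} ηⁿ_j log((Tᵀp)_j) ≥ -∑_{j: ηⁿ_j>0} ηⁿ_j log(ηⁿ_j), with equality if and only if (Tᵀp)_j = ηⁿ_j for every j with ηⁿ_j > 0. In particular, if T is invertible and ηⁿ has full support, then p = η is the unique minimizer over Δ^{K-1} of the population FC risk p ↦ -∑_j ηⁿ_j log((Tᵀp)_j). -/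
import Mathlib

/-- Core Gibbs lemma: weights w summing over s to 1, with q positive on s and
∑ over s of q ≤ 1. -/
lemma gibbs_aux {K : ℕ} (s : Finset (Fin K)) (w q : Fin K → ℝ)
    (hw : ∀ j ∈ s, 0 < w j) (hq : ∀ j ∈ s, 0 < q j)
    (hws : ∑ j ∈ s, w j = 1) (hqs : ∑ j ∈ s, q j ≤ 1) :
    (∑ j ∈ s, w j * Real.log (q j)) ≤ ∑ j ∈ s, w j * Real.log (w j) ∧
    ((∑ j ∈ s, w j * Real.log (q j)) = ∑ j ∈ s, w j * Real.log (w j) ↔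
      ∀ j ∈ s, q j = w j) := by
  have key : ∀ j ∈ s, w j * Real.log (q j) - w j * Real.log (w j) ≤ q j - w j := by
    intro j hj
    have hwj := hw j hj
    have hqj := hq j hj
    have h1 : Real.log (q j / w j) ≤ q j / w j - 1 :=
      Real.log_le_sub_one_of_pos (div_pos hqj hwj)
    rw [Real.log_div hqj.ne' hwj.ne'] at h1
    have := mul_le_mul_of_nonneg_left h1 hwj.le
    rw [mul_sub, mul_sub, mul_div_cancel₀ _ hwj.ne', mul_one] at this
    linarith [this]
  have hsum : ∑ j ∈ s, (w j * Real.log (q j) - w j * Real.log (w j)) ≤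
      ∑ j ∈ s, (q j - w j) := Finset.sum_le_sum key
  rw [Finset.sum_sub_distrib, Finset.sum_sub_distrib, hws] at hsum
  constructor
  · linarith
  constructor
  · intro heq
    have heq2 : ∑ j ∈ s, (w j * Real.log (q j) - w j * Real.log (w j)) = 0 := by
      rw [Finset.sum_sub_distrib, heq]; ring
    have heq3 : ∑ j ∈ s, (w j * Real.log (q j) - w j * Real.log (w j)) =
        ∑ j ∈ s, (q j - w j) := by
      have h1 : ∑ j ∈ s, (q j - w j) ≤ 0 := by
        rw [Finset.sum_sub_distrib, hws]; linarith
      have h2 := Finset.sum_le_sum key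
      linarith
    have hpt := (Finset.sum_eq_sum_iff_of_le key).1 heq3
    intro j hj
    have hwj := hw j hj
    have hqj := hq j hj
    have hj2 := hpt j hj
    by_contra hne
    have hne2 : q j / w j ≠ 1 := by
      intro h; exact hne (by field_simp at h; linarith)
    have h1 : Real.log (q j / w j) < q j / w j - 1 :=
      Real.log_lt_sub_one_of_pos (div_pos hqj hwj) hne2
    rw [Real.log_div hqj.ne' hwj.ne'] at h1
    have := mul_lt_mul_of_pos_left h1 hwj
    rw [mul_sub, mul_sub, mul_div_cancel₀ _ hwj.ne', mul_one] at this
    linarith [this, hj2]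
  · intro h
    apply Finset.sum_congr rfl
    intro j hj; rw [h j hj]

/-- Gibbs inequality for the population forward-corrected risk. With clean
posterior η in the simplex, row-stochastic T, and noisy posterior ηⁿ = Tᵀη: for every p in
the simplex with (Tᵀp)_j > 0 whenever ηⁿ_j > 0,
  -∑_{j : ηⁿ_j>0} ηⁿ_j log((Tᵀp)_j) ≥ -∑_{j : ηⁿ_j>0} ηⁿ_j log(ηⁿ_j),
with equality iff (Tᵀp)_j = ηⁿ_j for every j with ηⁿ_j > 0. In particular, if T is invertible
and ηⁿ has full support, then p = η is the unique minimizer of the population FC risk over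
the simplex. -/
theorem stmt16 {K : ℕ} (η : Fin K → ℝ) (hη : η ∈ stdSimplex ℝ (Fin K))
    (T : Matrix (Fin K) (Fin K) ℝ)
    (hTnn : ∀ i j, 0 ≤ T i j) (hTrow : ∀ i, ∑ j, T i j = 1)
    (ηn : Fin K → ℝ) (hηn : ∀ j, ηn j = ∑ k, T k j * η k) :
    (∀ p ∈ stdSimplex ℝ (Fin K), (∀ j, 0 < ηn j → 0 < ∑ k, T k j * p k) →
      ((-∑ j ∈ Finset.univ.filter (fun j => 0 < ηn j), ηn j * Real.log (ηn j))
          ≤ -∑ j ∈ Finset.univ.filter (fun j => 0 < ηn j), ηn j * Real.log (∑ k, T k j * p k)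
        ∧ ((-∑ j ∈ Finset.univ.filter (fun j => 0 < ηn j),
              ηn j * Real.log (∑ k, T k j * p k))
              = -∑ j ∈ Finset.univ.filter (fun j => 0 < ηn j), ηn j * Real.log (ηn j)
            ↔ ∀ j, 0 < ηn j → ∑ k, T k j * p k = ηn j)))
    ∧ (IsUnit T → (∀ j, 0 < ηn j) →
        ∀ p ∈ stdSimplex ℝ (Fin K), (∀ j, 0 < ∑ k, T k j * p k) →
          (-∑ j ∈ Finset.univ.filter (fun j => 0 < ηn j),
              ηn j * Real.log (∑ k, T k j * p k))
              = -∑ j ∈ Finset.univ.filter (fun j => 0 < ηn j), ηn j * Real.log (ηn j)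
            → p = η) := by
  obtain ⟨hηnn, hηsum⟩ := hη
  set s : Finset (Fin K) := Finset.univ.filter (fun j => 0 < ηn j) with hs
  -- ηn is nonnegative and sums to 1
  have hηn_nn : ∀ j, 0 ≤ ηn j := by
    intro j; rw [hηn]
    exact Finset.sum_nonneg fun k _ => mul_nonneg (hTnn k j) (hηnn k)
  have hηn_sum : ∑ j, ηn j = 1 := by
    simp only [hηn]
    rw [Finset.sum_comm]
    calc ∑ k, ∑ j, T k j * η k = ∑ k, (∑ j, T k j) * η k := by
          simp [Finset.sum_mul]
      _ = ∑ k, η k := by simp [hTrow]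
      _ = 1 := hηsum
  have hηn_s : ∑ j ∈ s, ηn j = 1 := by
    rw [← hηn_sum]
    apply Finset.sum_subset (Finset.filter_subset _ _)
    intro j _ hj
    simp only [hs, Finset.mem_filter, Finset.mem_univ, true_and] at hj
    exact le_antisymm (not_lt.1 hj) (hηn_nn j)
  have hw : ∀ j ∈ s, 0 < ηn j := by
    intro j hj; simpa [hs, Finset.mem_filter] using hj
  -- generic facts about q for p in simplex
  have hqfacts : ∀ p ∈ stdSimplex ℝ (Fin K),
      (∑ j ∈ s, (∑ k, T k j * p k)) ≤ 1 := by
    intro p hp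
    obtain ⟨hpnn, hpsum⟩ := hp
    have hq_sum : ∑ j, (∑ k, T k j * p k) = 1 := by
      rw [Finset.sum_comm]
      calc ∑ k, ∑ j, T k j * p k = ∑ k, (∑ j, T k j) * p k := by
            simp [Finset.sum_mul]
        _ = ∑ k, p k := by simp [hTrow]
        _ = 1 := hpsum
    rw [← hq_sum]
    apply Finset.sum_le_sum_of_subset_of_nonneg (Finset.filter_subset _ _)
    intro j _ _
    exact Finset.sum_nonneg fun k _ => mul_nonneg (hTnn k j) (hpnn k)
  constructor
  · intro p hp hpos
    have hq : ∀ j ∈ s, 0 < ∑ k, T k j * p k := fun j hj => hpos j (hw j hj)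
    obtain ⟨h1, h2⟩ := gibbs_aux s ηn (fun j => ∑ k, T k j * p k) hw hq hηn_s
      (hqfacts p hp)
    refine ⟨by linarith, ?_⟩
    rw [neg_eq_iff_eq_neg, neg_neg] at *
    constructor
    · intro h
      intro j hjpos
      exact h2.1 (by linarith) j (by simp [hs, Finset.mem_filter, hjpos])
    · intro h
      have := h2.2 (fun j hj => h j (hw j hj))
      linarith
  · intro hT hfull p hp hpos heq
    have hq : ∀ j ∈ s, 0 < ∑ k, T k j * p k := fun j _ => hpos j
    obtain ⟨h1, h2⟩ := gibbs_aux s ηn (fun j => ∑ k, T k j * p k) hw hq hηn_s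
      (hqfacts p hp)
    have heq2 : ∀ j ∈ s, (∑ k, T k j * p k) = ηn j := h2.1 (by linarith)
    have hall : ∀ j, (∑ k, T k j * p k) = ∑ k, T k j * η k := by
      intro j
      rw [← hηn j]
      exact heq2 j (by simp [hs, Finset.mem_filter, hfull j])
    -- Tᵀ is a unit, so mulVec is injective
    have hTt : IsUnit T.transpose := by
      rw [Matrix.isUnit_iff_isUnit_det, Matrix.det_transpose,
        ← Matrix.isUnit_iff_isUnit_det]
      exact hT
    have hinj := Matrix.mulVec_injective_iff_isUnit.2 hTt
    apply hinj
    funext j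
    simp only [Matrix.mulVec, dotProduct, Matrix.transpose_apply]
    exact hall j
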